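/- arXiv:1811.10918 — 3 statements merged into one kernel-verified Lean document; each statement's English description precedes it below -/
import Mathlib

section
/- Let v = 1u0 be a type α Dyck word of length n (so u is a Dyck word of length n−2), and let B = 11w where w is a Dyck word of length n−2 with w ≠ u. Then v and B are non-overlapping strings. -/
/-- number of 1's in a binary word (1 = `true`) -/
def ones (w : List Bool) : ℕ := w.count true

/-- number of 0's in a binary word (0 = `false`) -/
def zeros (w : List Bool) : ℕ := w.count false

/-- Dyck word: equally many 1's and 0's, every prefix has at least as many 1's as 0's. -/
def IsDyck (w : List Bool) : Prop :=
  ones w = zeros w ∧ ∀ γ : List Bool, γ <+: w → zeros γ ≤ ones γ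

/-- type α Dyck word: a Dyck word all of whose nonempty proper prefixes have
strictly more 1's than 0's. -/
def IsAlphaDyck (v : List Bool) : Prop :=
  IsDyck v ∧ ∀ γ : List Bool, γ <+: v → γ ≠ [] → γ ≠ v → zeros γ < ones γ

/-- two strings are non-overlapping: no nonempty proper prefix of either equals a
nonempty proper suffix of the other. -/
def NonOverlapping (x y : List Bool) : Prop :=
  ∀ s : List Bool, s ≠ [] →
    ¬(s <+: x ∧ s ≠ x ∧ s <:+ y ∧ s ≠ y) ∧
    ¬(s <+: y ∧ s ≠ y ∧ s <:+ x ∧ s ≠ x)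

/-!
Every suffix of a Dyck word has at least as many 0's as 1's. A proper suffix of `B = 11w` is
either `1w` or a suffix of `w`; the latter cannot be a nonempty proper prefix of the type α word
`v`, which has more 1's than 0's, and `1w` is a prefix of `v = 1u0` only if `w` is the prefix of
`u0` of length `|u|`, that is `w = u`. Conversely, every nonempty prefix of `11w` has more 1's
than 0's, so it is not a suffix of the Dyck word `v`.
-/

theorem IsDyck.ones_le_zeros_of_isSuffix {w s : List Bool} (hw : IsDyck w) (hs : s <:+ w) :
    ones s ≤ zeros s := by
  obtain ⟨p, rfl⟩ := hs
  have hp := hw.2 p (List.prefix_append p s)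
  have hbal := hw.1
  simp only [ones, zeros, List.count_append] at hp hbal ⊢
  omega

theorem zeros_lt_ones_of_isPrefix_true_cons {w s : List Bool}
    (hw : ∀ γ : List Bool, γ <+: w → zeros γ ≤ ones γ) (hs : s <+: true :: w) (hne : s ≠ []) :
    zeros s < ones s := by
  obtain rfl | ⟨t, rfl, ht⟩ := List.prefix_cons_iff.mp hs
  · exact absurd rfl hne
  · simpa [ones, zeros, Nat.lt_add_one_iff] using hw t ht

theorem IsDyck.zeros_lt_ones_of_isPrefix_true_true_cons {w s : List Bool} (hw : IsDyck w)
    (hs : s <+: true :: true :: w) (hne : s ≠ []) : zeros s < ones s := by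
  refine zeros_lt_ones_of_isPrefix_true_cons (fun γ hγ => ?_) hs hne
  rcases eq_or_ne γ [] with rfl | hγne
  · exact le_rfl
  · exact (zeros_lt_ones_of_isPrefix_true_cons hw.2 hγ hγne).le

theorem alpha_type2_nonoverlapping_general (n : ℕ) (u v w B : List Bool)
    (hv : v = true :: (u ++ [false])) (hα : IsAlphaDyck v)
    (hul : u.length = n - 2)
    (hw : IsDyck w) (hwl : w.length = n - 2) (hwu : w ≠ u)
    (hB : B = true :: true :: w) : NonOverlapping v B := by
  intro s hs
  constructor
  · rintro ⟨hsv, hsv_ne, hsB, hsB_ne⟩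
    have hpos := hα.2 s hsv hs hsv_ne
    subst hB
    rcases List.suffix_cons_iff.mp hsB with rfl | hsB
    · exact hsB_ne rfl
    rcases List.suffix_cons_iff.mp hsB with rfl | hsw
    · have hlen : w.length = u.length := hwl.trans hul.symm
      have hw_pre : w <+: u ++ [false] := by simpa [hv] using hsv
      exact hwu ((List.prefix_of_prefix_length_le hw_pre (List.prefix_append u [false])
        hlen.le).eq_of_length hlen)
    · exact hpos.not_ge (hw.ones_le_zeros_of_isSuffix hsw)
  · rintro ⟨hsB, -, hsv, -⟩
    subst hB
    exact (hw.zeros_lt_ones_of_isPrefix_true_true_cons hsB hs).not_ge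
      (hα.1.ones_le_zeros_of_isSuffix hsv)

/-- v = 1u0 type α of length n and B = 11w with w Dyck of length n−2, w ≠ u,
are non-overlapping. -/
theorem alpha_type2_nonoverlapping (n : ℕ) (u v w B : List Bool)
    (hv : v = true :: (u ++ [false])) (hα : IsAlphaDyck v) (hvlen : v.length = n)
    (hu : IsDyck u) (hul : u.length = n - 2)
    (hw : IsDyck w) (hwl : w.length = n - 2) (hwu : w ≠ u)
    (hB : B = true :: true :: w) : NonOverlapping v B :=
  alpha_type2_nonoverlapping_general n u v w B hv hα hul hw hwl hwu hB
end

section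
/- Let n be odd, let u be a type α Dyck word of length n−1, and set A₁ = 1u. If B = 1w where w is a Dyck word of length n−1 with w ≠ u, then A₁ and B are non-overlapping strings. -/
/-!
A nonempty prefix of `1v`, for a Dyck word `v`, has strictly more 1's than 0's, while a proper
suffix of `1w` is a suffix of the Dyck word `w` and so has at least as many 0's as 1's. Hence no
word is both, in either direction.
-/

lemma zeros_lt_ones_of_prefix_cons_true {v s : List Bool}
    (hv : ∀ γ : List Bool, γ <+: v → zeros γ ≤ ones γ) (hs : s <+: true :: v) (hne : s ≠ []) :
    zeros s < ones s := by
  obtain ⟨t, ht⟩ := hs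
  cases s with
  | nil => exact absurd rfl hne
  | cons b rest =>
    obtain ⟨rfl, hrest⟩ := List.cons_eq_cons.mp ht
    simpa [zeros, ones, List.count_cons, Nat.lt_succ_iff] using hv rest ⟨t, hrest⟩

lemma IsDyck.ones_le_zeros_of_suffix {v s : List Bool} (hv : IsDyck v) (hs : s <:+ v) :
    ones s ≤ zeros s := by
  obtain ⟨γ, rfl⟩ := hs
  have hbal := hv.1
  have hγ := hv.2 γ ⟨s, rfl⟩
  simp only [ones, zeros, List.count_append] at hbal hγ ⊢
  omega

lemma not_prefix_cons_true_and_suffix_cons_true {v w s : List Bool} (hv : IsDyck v)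
    (hw : IsDyck w) (hs : s ≠ []) (hpre : s <+: true :: v) (hsuf : s <:+ true :: w)
    (hsw : s ≠ true :: w) : False := by
  have hpos : zeros s < ones s := zeros_lt_ones_of_prefix_cons_true hv.2 hpre hs
  have hsuf' : s <:+ w := (List.suffix_cons_iff.mp hsuf).resolve_left hsw
  have hnonpos : ones s ≤ zeros s := hw.ones_le_zeros_of_suffix hsuf'
  omega

theorem nonOverlapping_cons_true {v w : List Bool} (hv : IsDyck v) (hw : IsDyck w) :
    NonOverlapping (true :: v) (true :: w) := fun _ hs =>
  ⟨fun ⟨hpre, _, hsuf, hsw⟩ => not_prefix_cons_true_and_suffix_cons_true hv hw hs hpre hsuf hsw,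
   fun ⟨hpre, _, hsuf, hsv⟩ => not_prefix_cons_true_and_suffix_cons_true hw hv hs hpre hsuf hsv⟩

theorem odd_type6_nonoverlapping_general (u A₁ w B : List Bool)
    (hu : IsAlphaDyck u) (hA : A₁ = true :: u)
    (hw : IsDyck w)
    (hB : B = true :: w) : NonOverlapping A₁ B := by
  subst hA hB
  exact nonOverlapping_cons_true hu.1 hw

/-- n odd, u type α of length n−1, A₁ = 1u; B = 1w with w Dyck of length n−1,
w ≠ u: then A₁ and B are non-overlapping. -/
theorem odd_type6_nonoverlapping (n : ℕ) (hodd : Odd n) (u A₁ w B : List Bool)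
    (hu : IsAlphaDyck u) (hul : u.length = n - 1) (hA : A₁ = true :: u)
    (hw : IsDyck w) (hwl : w.length = n - 1) (hwu : w ≠ u)
    (hB : B = true :: w) : NonOverlapping A₁ B :=
  odd_type6_nonoverlapping_general u A₁ w B hu hA hw hB
end

section
/- Fix m ≥ 2 and even n ≥ 4, and fix a type α Dyck word A₁ = 1u0 of length n. The cardinality of the set L_{m×n} of matrices defined from A₁ equals ((C_{n/2} − 1) + 3(C_{(n−2)/2} − 1) + C_{(n−2)/2})^{m−2} · ((C_{n/2} − 1) + 2(C_{(n−2)/2} − 1)), where C_k denotes the k-th Catalan number. -/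
/-- type 1 row: a Dyck word of length n different from A₁. -/
def Row1 (n : ℕ) (A₁ r : List Bool) : Prop := IsDyck r ∧ r.length = n ∧ r ≠ A₁

/-- type 2 row: 11w, w Dyck of length n−2, w ≠ u. -/
def Row2 (n : ℕ) (u r : List Bool) : Prop :=
  ∃ w : List Bool, IsDyck w ∧ w.length = n - 2 ∧ w ≠ u ∧ r = true :: true :: w

/-- type 3 row: w00, w Dyck of length n−2, w ≠ u. -/
def Row3 (n : ℕ) (u r : List Bool) : Prop :=
  ∃ w : List Bool, IsDyck w ∧ w.length = n - 2 ∧ w ≠ u ∧ r = w ++ [false, false]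

/-- type 4 row: 01w, w Dyck of length n−2, w ≠ u. -/
def Row4 (n : ℕ) (u r : List Bool) : Prop :=
  ∃ w : List Bool, IsDyck w ∧ w.length = n - 2 ∧ w ≠ u ∧ r = false :: true :: w

/-- type 5 row: 0w0, w Dyck of length n−2. -/
def Row5 (n : ℕ) (r : List Bool) : Prop :=
  ∃ w : List Bool, IsDyck w ∧ w.length = n - 2 ∧ r = false :: (w ++ [false])

/-!
Each row of a matrix in `L_{m×n}` is chosen independently: the first is fixed, each of the
`m - 2` middle rows ranges over the union of the five row types, the last one over the union of
types 1–3. These unions are disjoint: rows of types 1–3 begin with 1 and rows of types 4, 5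
with 0, and within each group the types are told apart by `ones - zeros` (0, +2, −2).
Each type is in bijection with the Dyck words of length `n` or `n - 2` (minus `A₁`, resp. `u`;
note that `A₁ = 1u0` is itself Dyck), which are counted by Mathlib's `DyckWord`.
-/

open List DyckStep

namespace DyckStep

def toBool : DyckStep → Bool
  | U => true
  | D => false

def ofBool : Bool → DyckStep
  | true => U
  | false => D

theorem ofBool_toBool (s : DyckStep) : ofBool (toBool s) = s := by cases s <;> rfl

theorem toBool_ofBool (b : Bool) : toBool (ofBool b) = b := by cases b <;> rfl

theorem toBool_injective : Function.Injective toBool :=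
  Function.LeftInverse.injective ofBool_toBool

theorem ofBool_injective : Function.Injective ofBool :=
  Function.LeftInverse.injective toBool_ofBool

theorem ones_map_toBool (l : List DyckStep) : ones (l.map toBool) = l.count U :=
  count_map_of_injective l toBool toBool_injective U

theorem zeros_map_toBool (l : List DyckStep) : zeros (l.map toBool) = l.count D :=
  count_map_of_injective l toBool toBool_injective D

theorem count_U_map_ofBool (w : List Bool) : (w.map ofBool).count U = ones w :=
  count_map_of_injective w ofBool ofBool_injective true

theorem count_D_map_ofBool (w : List Bool) : (w.map ofBool).count D = zeros w :=
  count_map_of_injective w ofBool ofBool_injective false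

end DyckStep

def dyckWordEquiv : DyckWord ≃ {w : List Bool // IsDyck w} where
  toFun p := ⟨p.toList.map toBool, by
    refine ⟨by rw [ones_map_toBool, zeros_map_toBool, p.count_U_eq_count_D], fun γ hγ => ?_⟩
    obtain ⟨i, rfl⟩ : ∃ i, γ = (p.toList.map toBool).take i :=
      ⟨_, prefix_iff_eq_take.1 hγ⟩
    rw [← map_take, ones_map_toBool, zeros_map_toBool]
    exact p.count_D_le_count_U i⟩
  invFun w := ⟨w.1.map ofBool,
    by rw [count_U_map_ofBool, count_D_map_ofBool]; exact w.2.1,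
    fun i => by
      rw [← map_take, count_U_map_ofBool, count_D_map_ofBool]
      exact w.2.2 _ (take_prefix i _)⟩
  left_inv p := by ext1; simp [Function.comp_def, ofBool_toBool]
  right_inv w := by ext1; simp [Function.comp_def, toBool_ofBool]

theorem ncard_setOf_isDyck_length {n : ℕ} (hne : Even n) :
    {w | IsDyck w ∧ w.length = n}.ncard = catalan (n / 2) := by
  have hlen (p : DyckWord) : (dyckWordEquiv p).1.length = 2 * p.semilength := by
    simp [dyckWordEquiv, DyckWord.two_mul_semilength_eq_length]
  calc {w | IsDyck w ∧ w.length = n}.ncard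
      = Nat.card {p : DyckWord // p.semilength = n / 2} := by
        rw [← Nat.card_coe_set_eq]
        refine Nat.card_congr ((Equiv.subtypeSubtypeEquivSubtypeInter IsDyck _).symm.trans
          (dyckWordEquiv.subtypeEquiv fun p => ?_).symm)
        obtain ⟨k, rfl⟩ := hne
        rw [hlen]; omega
    _ = catalan (n / 2) := by
        rw [Nat.card_eq_fintype_card, DyckWord.card_dyckWord_semilength_eq_catalan]

theorem IsDyck.head?_eq {w : List Bool} (h : IsDyck w) (hw : w ≠ []) : w.head? = some true := by
  obtain ⟨b, t, rfl⟩ := exists_cons_of_ne_nil hw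
  have := h.2 [b] ((prefix_cons_inj b).2 nil_prefix)
  cases b <;> simp_all [ones, zeros]

theorem IsDyck.true_cons_append_false {u : List Bool} (hu : IsDyck u) :
    IsDyck (true :: (u ++ [false])) := by
  have hbal := hu.1
  refine ⟨by simp_all [ones, zeros], fun γ hγ => ?_⟩
  rcases prefix_cons_iff.1 hγ with rfl | ⟨t, rfl, ht⟩
  · simp [ones, zeros]
  rcases prefix_concat_iff.1 ht with rfl | ht
  · simp_all [ones, zeros]
  · have := hu.2 t ht
    simp [ones, zeros] at this ⊢
    omega

theorem Set.ncard_setOf_or {α : Type*} {p q : α → Prop} (hpq : {a | p a ∨ q a}.Finite)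
    (h : ∀ a, p a → ¬q a) :
    {a | p a ∨ q a}.ncard = {a | p a}.ncard + {a | q a}.ncard := by
  rw [Set.ofPred_or] at hpq ⊢
  exact Set.ncard_union_eq (Set.disjoint_left.2 h) (hpq.subset Set.subset_union_left)
    (hpq.subset Set.subset_union_right)

theorem ncard_isDyck_sdiff_singleton {k : ℕ} (hk : Even k) {u : List Bool} (hu : IsDyck u)
    (hul : u.length = k) :
    ({w | IsDyck w ∧ w.length = k} \ {u}).ncard = catalan (k / 2) - 1 := by
  have hmem : u ∈ {w | IsDyck w ∧ w.length = k} := ⟨hu, hul⟩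
  rw [Set.ncard_sdiff_singleton_of_mem hmem, ncard_setOf_isDyck_length hk]

section Rows

variable {n : ℕ} {u A₁ r : List Bool}

theorem Row2.ones_eq (h : Row2 n u r) : ones r = zeros r + 2 := by
  obtain ⟨w, hw, -, -, rfl⟩ := h
  have := hw.1
  simp_all [ones, zeros]

theorem Row3.zeros_eq (h : Row3 n u r) : zeros r = ones r + 2 := by
  obtain ⟨w, hw, -, -, rfl⟩ := h
  have := hw.1
  simp_all [ones, zeros]

theorem Row4.ones_eq (h : Row4 n u r) : ones r = zeros r := by
  obtain ⟨w, hw, -, -, rfl⟩ := h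
  have := hw.1
  simp_all [ones, zeros]

theorem Row5.zeros_eq (h : Row5 n r) : zeros r = ones r + 2 := by
  obtain ⟨w, hw, -, rfl⟩ := h
  have := hw.1
  simp_all [ones, zeros]

theorem head?_eq_some_true_of_row (hn : 3 ≤ n)
    (h : Row1 n A₁ r ∨ Row2 n u r ∨ Row3 n u r) : r.head? = some true := by
  rcases h with ⟨hr, hl, -⟩ | ⟨w, -, -, -, rfl⟩ | ⟨w, hw, hl, -, rfl⟩
  · exact hr.head?_eq (ne_nil_of_length_pos (by omega))
  · rfl
  · have hw' : w ≠ [] := ne_nil_of_length_pos (by omega)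
    rw [head?_append_of_ne_nil _ hw', hw.head?_eq hw']

theorem head?_eq_some_false_of_row (h : Row4 n u r ∨ Row5 n r) : r.head? = some false := by
  rcases h with ⟨w, -, -, -, rfl⟩ | ⟨w, -, -, rfl⟩ <;> rfl

theorem finite_setOf_row (hn : 2 ≤ n) :
    {r | Row1 n A₁ r ∨ Row2 n u r ∨ Row3 n u r ∨ Row4 n u r ∨ Row5 n r}.Finite :=
  (List.finite_length_eq Bool n).subset fun r h => by
    rcases h with ⟨-, h, -⟩ | ⟨w, -, h, -, rfl⟩ | ⟨w, -, h, -, rfl⟩ |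
      ⟨w, -, h, -, rfl⟩ | ⟨w, -, h, rfl⟩ <;> simp <;> omega

theorem ncard_setOf_row1 (hne : Even n) (hA₁ : IsDyck A₁) (hA₁l : A₁.length = n) :
    {r | Row1 n A₁ r}.ncard = catalan (n / 2) - 1 := by
  rw [← ncard_isDyck_sdiff_singleton hne hA₁ hA₁l]
  congr 1; ext r; simp [Row1, and_assoc]

theorem ncard_image_isDyck_sdiff {f : List Bool → List Bool} (hf : f.Injective) (hne : Even n)
    (hu : IsDyck u) (hul : u.length = n - 2) :
    (f '' ({w | IsDyck w ∧ w.length = n - 2} \ {u})).ncard = catalan ((n - 2) / 2) - 1 := by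
  rw [Set.ncard_image_of_injective _ hf, ncard_isDyck_sdiff_singleton (hne.tsub even_two) hu hul]

theorem ncard_setOf_row2 (hne : Even n) (hu : IsDyck u) (hul : u.length = n - 2) :
    {r | Row2 n u r}.ncard = catalan ((n - 2) / 2) - 1 := by
  rw [← ncard_image_isDyck_sdiff (f := fun w => true :: true :: w)
    (fun a b h => by simpa using h) hne hu hul]
  congr 1; ext r; simp [Row2, and_assoc, eq_comm]

theorem ncard_setOf_row3 (hne : Even n) (hu : IsDyck u) (hul : u.length = n - 2) :
    {r | Row3 n u r}.ncard = catalan ((n - 2) / 2) - 1 := by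
  rw [← ncard_image_isDyck_sdiff (append_left_injective [false, false]) hne hu hul]
  congr 1; ext r; simp [Row3, and_assoc, eq_comm]

theorem ncard_setOf_row4 (hne : Even n) (hu : IsDyck u) (hul : u.length = n - 2) :
    {r | Row4 n u r}.ncard = catalan ((n - 2) / 2) - 1 := by
  rw [← ncard_image_isDyck_sdiff (f := fun w => false :: true :: w)
    (fun a b h => by simpa using h) hne hu hul]
  congr 1; ext r; simp [Row4, and_assoc, eq_comm]

theorem ncard_setOf_row5 (hne : Even n) :
    {r | Row5 n r}.ncard = catalan ((n - 2) / 2) := by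
  have : {r | Row5 n r} =
      (fun w => false :: (w ++ [false])) '' {w | IsDyck w ∧ w.length = n - 2} := by
    ext r; simp [Row5, and_assoc, eq_comm]
  rw [this, Set.ncard_image_of_injective _ (fun a b h => by simpa using h),
    ncard_setOf_isDyck_length (hne.tsub even_two)]

theorem ncard_setOf_lastRow (hn : 2 ≤ n) (hne : Even n) (hu : IsDyck u)
    (hul : u.length = n - 2) (hA₁ : IsDyck A₁) (hA₁l : A₁.length = n) :
    {r | Row1 n A₁ r ∨ Row2 n u r ∨ Row3 n u r}.ncard =
      (catalan (n / 2) - 1) + 2 * (catalan ((n - 2) / 2) - 1) := by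
  have hfin : {r | Row1 n A₁ r ∨ Row2 n u r ∨ Row3 n u r}.Finite :=
    (finite_setOf_row hn).subset (Set.ofPred_subset_ofPred_of_imp fun r h => by tauto)
  rw [Set.ncard_setOf_or hfin, Set.ncard_setOf_or (hfin.subset fun r => Or.inr),
    ncard_setOf_row1 hne hA₁ hA₁l, ncard_setOf_row2 hne hu hul, ncard_setOf_row3 hne hu hul]
  · ring
  · intro r h2 h3; have := h2.ones_eq; have := h3.zeros_eq; omega
  · rintro r h1 (h2 | h3)
    · have := h1.1.1; have := h2.ones_eq; omega
    · have := h1.1.1; have := h3.zeros_eq; omega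

theorem ncard_setOf_middleRow (hn : 4 ≤ n) (hne : Even n) (hu : IsDyck u)
    (hul : u.length = n - 2) (hA₁ : IsDyck A₁) (hA₁l : A₁.length = n) :
    {r | Row1 n A₁ r ∨ Row2 n u r ∨ Row3 n u r ∨ Row4 n u r ∨ Row5 n r}.ncard =
      (catalan (n / 2) - 1) + 3 * (catalan ((n - 2) / 2) - 1) + catalan ((n - 2) / 2) := by
  have hregroup : {r | Row1 n A₁ r ∨ Row2 n u r ∨ Row3 n u r ∨ Row4 n u r ∨ Row5 n r} =
      {r | (Row1 n A₁ r ∨ Row2 n u r ∨ Row3 n u r) ∨ (Row4 n u r ∨ Row5 n r)} := by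
    simp only [or_assoc]
  have hfin := finite_setOf_row (A₁ := A₁) (u := u) (by omega : 2 ≤ n)
  rw [hregroup] at hfin ⊢
  rw [Set.ncard_setOf_or hfin, Set.ncard_setOf_or (hfin.subset fun r => Or.inr),
    ncard_setOf_lastRow (by omega) hne hu hul hA₁ hA₁l, ncard_setOf_row4 hne hu hul,
    ncard_setOf_row5 hne]
  · ring
  · intro r h4 h5; have := h4.ones_eq; have := h5.zeros_eq; omega
  · intro r hlast hlow
    have := (head?_eq_some_false_of_row hlow).symm.trans
      (head?_eq_some_true_of_row (by omega) hlast)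
    simp at this

end Rows

theorem Set.ncard_univ_pi {ι α : Type*} [Fintype ι] (t : ι → Set α) :
    (Set.pi Set.univ t).ncard = ∏ i, (t i).ncard := by
  simp only [← Nat.card_coe_set_eq, Nat.card_congr (Equiv.Set.univPi t), Nat.card_pi]

theorem ncard_setOf_first_eq_middle_mem_last_mem {α : Type*} (m : ℕ) (hm : 2 ≤ m) (a : α)
    (S T : Set α) :
    {A : Fin m → α | A ⟨0, by omega⟩ = a ∧
      (∀ i : Fin m, 0 < (i : ℕ) → (i : ℕ) < m - 1 → A i ∈ S) ∧
      A ⟨m - 1, by omega⟩ ∈ T}.ncard = S.ncard ^ (m - 2) * T.ncard := by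
  obtain ⟨k, rfl⟩ : ∃ k, m = k + 2 := ⟨m - 2, by omega⟩
  have hpi : {A : Fin (k + 2) → α | A ⟨0, by omega⟩ = a ∧
      (∀ i : Fin (k + 2), 0 < (i : ℕ) → (i : ℕ) < k + 2 - 1 → A i ∈ S) ∧
      A ⟨k + 2 - 1, by omega⟩ ∈ T} =
        Set.pi Set.univ (Fin.cons (α := fun _ => Set α) {a} (Fin.snoc (fun _ => S) T)) := by
    ext A
    rw [Set.mem_univ_pi, Fin.forall_fin_succ, Fin.forall_fin_succ']
    simp only [Fin.cons_zero, Fin.cons_succ, Fin.snoc_castSucc, Fin.snoc_last,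
      Set.mem_singleton_iff, Set.mem_ofPred_eq]
    refine and_congr Iff.rfl (and_congr ⟨fun h j => h _ (Nat.succ_pos _) (by simp),
      fun h i hi hik => ?_⟩ Iff.rfl)
    obtain ⟨j, rfl⟩ : ∃ j : Fin k, i = j.castSucc.succ :=
      ⟨⟨i - 1, by omega⟩, Fin.ext (by simp; omega)⟩
    exact h j
  rw [hpi, Set.ncard_univ_pi, Fin.prod_univ_succ, Fin.prod_univ_castSucc]
  simp

/-- cardinality of L_{m×n}, n even. -/
theorem card_L_even (m n : ℕ) (hm : 2 ≤ m) (hn : 4 ≤ n) (hne : Even n)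
    (u : List Bool) (hu : IsDyck u) (hul : u.length = n - 2)
    (A₁ : List Bool) (hA₁ : A₁ = true :: (u ++ [false])) :
    {A : Fin m → List Bool |
        A ⟨0, by omega⟩ = A₁ ∧
        (∀ i : Fin m, 0 < (i : ℕ) → (i : ℕ) < m - 1 →
          (Row1 n A₁ (A i) ∨ Row2 n u (A i) ∨ Row3 n u (A i) ∨ Row4 n u (A i) ∨
            Row5 n (A i))) ∧
        (Row1 n A₁ (A ⟨m - 1, by omega⟩) ∨ Row2 n u (A ⟨m - 1, by omega⟩) ∨
          Row3 n u (A ⟨m - 1, by omega⟩))}.ncard =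
      ((catalan (n / 2) - 1) + 3 * (catalan ((n - 2) / 2) - 1) + catalan ((n - 2) / 2)) ^ (m - 2) *
        ((catalan (n / 2) - 1) + 2 * (catalan ((n - 2) / 2) - 1)) := by
  have hA₁d : IsDyck A₁ := hA₁ ▸ hu.true_cons_append_false
  have hA₁l : A₁.length = n := by simp [hA₁, hul]; omega
  have hcount := ncard_setOf_first_eq_middle_mem_last_mem m hm A₁
    {r | Row1 n A₁ r ∨ Row2 n u r ∨ Row3 n u r ∨ Row4 n u r ∨ Row5 n r}
    {r | Row1 n A₁ r ∨ Row2 n u r ∨ Row3 n u r}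
  rwa [ncard_setOf_middleRow hn hne hu hul hA₁d hA₁l,
    ncard_setOf_lastRow (by omega) hne hu hul hA₁d hA₁l] at hcount
end
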